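/- Let G be a diagonal real 3×3 matrix whose diagonal entries are positive and pairwise distinct, let U ∈ O(3), and set K = U G Uᵀ. Then a matrix Q ∈ SO(3) satisfies K Q = Qᵀ K if and only if Q ∈ {I₃, U D₁ Uᵀ, U D₂ Uᵀ, U D₃ Uᵀ}, where D_i = 2 e_i e_iᵀ − I₃ and e_i is the i-th standard basis vector of ℝ³. -/

import Mathlib

open Matrix

/-- The matrix `D i = 2 eᵢ eᵢᵀ − I₃`. -/
def Dmat (i : Fin 3) : Matrix (Fin 3) (Fin 3) ℝ :=
  (2 : ℝ) • vecMulVec (Pi.single i 1) (Pi.single i 1) - 1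

lemma Dmat_apply (i j k : Fin 3) :
    Dmat i j k = (if j = i ∧ k = i then 2 else 0) - (if j = k then 1 else 0) := by
  simp only [Dmat, Matrix.sub_apply, Matrix.smul_apply, vecMulVec_apply, one_apply, Pi.single_apply,
    smul_eq_mul]
  by_cases h1 : j = i <;> by_cases h2 : k = i <;> simp [h1, h2]

lemma Dmat_offdiag (i j k : Fin 3) (h : j ≠ k) : Dmat i j k = 0 := by
  rw [Dmat_apply]
  have : ¬(j = i ∧ k = i) := by rintro ⟨rfl, rfl⟩; exact h rfl
  simp [this, h]

lemma Dmat_transpose (i : Fin 3) : (Dmat i)ᵀ = Dmat i := by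
  ext a b
  rw [transpose_apply, Dmat_apply, Dmat_apply]
  by_cases h : a = b
  · subst h; rfl
  · have hab : ¬(a = i ∧ b = i) := by rintro ⟨rfl, rfl⟩; exact h rfl
    have hba : ¬(b = i ∧ a = i) := by rintro ⟨rfl, rfl⟩; exact h rfl
    simp [hab, hba, h, Ne.symm h]

lemma Dmat_diag (i k : Fin 3) : Dmat i k k = if k = i then 1 else -1 := by
  rw [Dmat_apply]
  by_cases h : k = i <;> simp [h] <;> norm_num

lemma key_lemma (G P : Matrix (Fin 3) (Fin 3) ℝ) (hG : G.IsDiag)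
    (hGpos : ∀ i, 0 < G i i) (hGdist : ∀ i j, i ≠ j → G i i ≠ G j j)
    (hP : Pᵀ * P = 1) (hPdet : P.det = 1) (H : G * P = Pᵀ * G) :
    P = 1 ∨ P = Dmat 0 ∨ P = Dmat 1 ∨ P = Dmat 2 := by
  have hP2 : P * Pᵀ = 1 := mul_eq_one_comm.mp hP
  -- G invertible
  have hGdet : G.det = G 0 0 * G 1 1 * G 2 2 := by
    rw [det_fin_three]
    rw [hG (show (0:Fin 3) ≠ 1 by decide), hG (show (0:Fin 3) ≠ 2 by decide),
      hG (show (1:Fin 3) ≠ 0 by decide), hG (show (1:Fin 3) ≠ 2 by decide),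
      hG (show (2:Fin 3) ≠ 0 by decide), hG (show (2:Fin 3) ≠ 1 by decide)]
    ring
  have hGunit : IsUnit G := by
    rw [Matrix.isUnit_iff_isUnit_det, hGdet]
    exact (mul_pos (mul_pos (hGpos 0) (hGpos 1)) (hGpos 2)).ne'.isUnit
  -- (G*P)*(G*P) = G*G
  have step1 : G * (P * G * P) = G * G := by
    calc G * (P * G * P) = (G * P) * (G * P) := by noncomm_ring
    _ = (G * P) * (Pᵀ * G) := by rw [H]
    _ = G * (P * Pᵀ) * G := by noncomm_ring
    _ = G * G := by rw [hP2]; noncomm_ring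
  have step2 : P * G * P = G := hGunit.mul_left_cancel (by rw [← mul_assoc] at step1 ⊢; exact step1)
  have step3 : P * G = G * Pᵀ := by
    calc P * G = (P * G * P) * Pᵀ := by rw [mul_assoc, mul_assoc, hP2]; noncomm_ring
    _ = G * Pᵀ := by rw [step2]
  -- entrywise equations
  have hA1 : ∀ i j, G i i * P i j = P j i * G j j := by
    intro i j
    have := congrFun (congrFun H i) j
    rw [mul_apply, mul_apply] at this
    rw [Finset.sum_eq_single i (fun k _ hk => by rw [hG (Ne.symm hk), zero_mul])
      (fun h => absurd (Finset.mem_univ i) h)] at this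
    rw [Finset.sum_eq_single j (fun k _ hk => by rw [transpose_apply, hG hk, mul_zero])
      (fun h => absurd (Finset.mem_univ j) h)] at this
    rwa [transpose_apply] at this
  have hA2 : ∀ i j, P i j * G j j = G i i * P j i := by
    intro i j
    have := congrFun (congrFun step3 i) j
    rw [mul_apply, mul_apply] at this
    rw [Finset.sum_eq_single j (fun k _ hk => by rw [hG hk, mul_zero])
      (fun h => absurd (Finset.mem_univ j) h)] at this
    rw [Finset.sum_eq_single i (fun k _ hk => by rw [hG (Ne.symm hk), zero_mul])
      (fun h => absurd (Finset.mem_univ i) h)] at this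
    rwa [transpose_apply] at this
  have hoff : ∀ i j, i ≠ j → P i j = 0 := by
    intro i j hij
    have hfac : P i j * ((G i i - G j j) * (G i i + G j j)) = 0 := by
      linear_combination G i i * (hA1 i j) - G j j * (hA2 i j)
    rcases mul_eq_zero.mp hfac with h | h
    · exact h
    · exfalso
      rcases mul_eq_zero.mp h with h' | h'
      · exact hGdist i j hij (by linarith)
      · have := hGpos i; have := hGpos j; linarith
  have hdiag : ∀ i, P i i = 1 ∨ P i i = -1 := by
    intro i
    have := congrFun (congrFun hP i) i
    rw [mul_apply, one_apply_eq] at this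
    rw [Finset.sum_eq_single i (fun k _ hk => by
        rw [transpose_apply, hoff k i hk, mul_zero])
      (fun h => absurd (Finset.mem_univ i) h)] at this
    rw [transpose_apply] at this
    have hsq : P i i ^ 2 = 1 := by nlinarith
    rcases mul_eq_zero.mp (show (P i i - 1) * (P i i + 1) = 0 by nlinarith) with h | h
    · left; linarith
    · right; linarith
  have hdet3 : P 0 0 * P 1 1 * P 2 2 = 1 := by
    rw [det_fin_three] at hPdet
    rw [hoff 0 1 (by decide), hoff 0 2 (by decide), hoff 1 0 (by decide),
      hoff 1 2 (by decide), hoff 2 0 (by decide), hoff 2 1 (by decide)] at hPdet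
    linarith [hPdet]
  have hext : ∀ (M : Matrix (Fin 3) (Fin 3) ℝ), (∀ a b, a ≠ b → M a b = 0) →
      (P 0 0 = M 0 0) → (P 1 1 = M 1 1) → (P 2 2 = M 2 2) → P = M := by
    intro M hM h0 h1 h2
    ext a b
    by_cases hab : a = b
    · subst hab; fin_cases a <;> assumption
    · rw [hoff a b hab, hM a b hab]
  have hone : ∀ a b, a ≠ b → (1 : Matrix (Fin 3) (Fin 3) ℝ) a b = 0 :=
    fun a b hab => one_apply_ne hab
  have hDoff : ∀ i a b, a ≠ b → Dmat i a b = 0 := fun i a b hab => Dmat_offdiag i a b hab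
  rcases hdiag 0 with h0 | h0 <;> rcases hdiag 1 with h1 | h1 <;> rcases hdiag 2 with h2 | h2
  · exact Or.inl (hext 1 hone (by simp [h0]) (by simp [h1]) (by simp [h2]))
  · rw [h0, h1, h2] at hdet3; norm_num at hdet3
  · rw [h0, h1, h2] at hdet3; norm_num at hdet3
  · exact Or.inr (Or.inl (hext (Dmat 0) (hDoff 0)
      (by rw [h0, Dmat_diag]; simp) (by rw [h1, Dmat_diag]; simp)
      (by rw [h2, Dmat_diag]; simp)))
  · rw [h0, h1, h2] at hdet3; norm_num at hdet3
  · exact Or.inr (Or.inr (Or.inl (hext (Dmat 1) (hDoff 1)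
      (by rw [h0, Dmat_diag]; simp) (by rw [h1, Dmat_diag]; simp)
      (by rw [h2, Dmat_diag]; simp))))
  · exact Or.inr (Or.inr (Or.inr (hext (Dmat 2) (hDoff 2)
      (by rw [h0, Dmat_diag]; simp) (by rw [h1, Dmat_diag]; simp)
      (by rw [h2, Dmat_diag]; simp))))
  · rw [h0, h1, h2] at hdet3; norm_num at hdet3

lemma GD_comm (G : Matrix (Fin 3) (Fin 3) ℝ) (hG : G.IsDiag) (i : Fin 3) :
    G * Dmat i = Dmat i * G := by
  ext a b
  rw [mul_apply, mul_apply]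
  by_cases hab : a = b
  · subst hab
    rw [Finset.sum_eq_single a (fun k _ hk => by rw [hG (Ne.symm hk), zero_mul])
      (fun h => absurd (Finset.mem_univ a) h),
      Finset.sum_eq_single a (fun k _ hk => by rw [hG hk, mul_zero])
      (fun h => absurd (Finset.mem_univ a) h)]
    ring
  · rw [Finset.sum_eq_zero, Finset.sum_eq_zero]
    · intro k _
      by_cases h : k = b
      · subst h; rw [Dmat_offdiag i a k hab, zero_mul]
      · rw [hG h, mul_zero]
    · intro k _
      by_cases h : a = k
      · subst h; rw [Dmat_offdiag i a b hab, mul_zero]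
      · rw [hG h, zero_mul]

/-- For diagonal `G` with positive pairwise-distinct diagonal entries,
`U ∈ O(3)` and `K = U G Uᵀ`, a rotation `Q ∈ SO(3)` satisfies `K Q = Qᵀ K` iff
`Q ∈ {I₃, U D₁ Uᵀ, U D₂ Uᵀ, U D₃ Uᵀ}`. -/
theorem equilibria_characterization
    (G U Q : Matrix (Fin 3) (Fin 3) ℝ) (hG : G.IsDiag)
    (hGpos : ∀ i, 0 < G i i) (hGdist : ∀ i j, i ≠ j → G i i ≠ G j j)
    (hU : Uᵀ * U = 1) (hQ : Qᵀ * Q = 1) (hQdet : Q.det = 1) :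
    (U * G * Uᵀ) * Q = Qᵀ * (U * G * Uᵀ)
      ↔ Q ∈ ({1, U * Dmat 0 * Uᵀ, U * Dmat 1 * Uᵀ, U * Dmat 2 * Uᵀ} :
          Set (Matrix (Fin 3) (Fin 3) ℝ)) := by
  have hU2 : U * Uᵀ = 1 := mul_eq_one_comm.mp hU
  have cUUt : ∀ A : Matrix (Fin 3) (Fin 3) ℝ, U * (Uᵀ * A) = A := fun A => by
    rw [← mul_assoc, hU2, one_mul]
  have cUtU : ∀ A : Matrix (Fin 3) (Fin 3) ℝ, Uᵀ * (U * A) = A := fun A => by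
    rw [← mul_assoc, hU, one_mul]
  have cQtQ : ∀ A : Matrix (Fin 3) (Fin 3) ℝ, Qᵀ * (Q * A) = A := fun A => by
    rw [← mul_assoc, hQ, one_mul]
  constructor
  · intro h
    set P := Uᵀ * Q * U with hPdef
    have hPT : Pᵀ = Uᵀ * Qᵀ * U := by
      rw [hPdef, transpose_mul, transpose_mul, transpose_transpose, mul_assoc]
    have hPorth : Pᵀ * P = 1 := by
      rw [hPT, hPdef]
      simp only [mul_assoc]
      rw [cUUt, cQtQ, hU]
    have hUdet : U.det * U.det = 1 := by
      have := congrArg det hU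
      simpa [det_mul, det_transpose] using this
    have hPdet : P.det = 1 := by
      rw [hPdef, det_mul, det_mul, det_transpose, hQdet, mul_one, mul_comm, hUdet]
    have hGP : G * P = Pᵀ * G := by
      have h2 := congrArg (fun M => Uᵀ * M * U) h
      simp only [mul_assoc, cUtU, hU, mul_one] at h2
      rw [hPdef, hPT]
      simp only [mul_assoc]
      exact h2
    have hQP : Q = U * P * Uᵀ := by
      rw [hPdef]
      simp only [mul_assoc, cUUt, hU2, mul_one]
    rcases key_lemma G P hG hGpos hGdist hPorth hPdet hGP with h1 | h1 | h1 | h1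
    · left; rw [hQP, h1, mul_one, hU2]
    · right; left; rw [hQP, h1]
    · right; right; left; rw [hQP, h1]
    · right; right; right; rw [hQP, h1]; rfl
  · intro hmem
    have hcase : ∀ i : Fin 3, (U * G * Uᵀ) * (U * Dmat i * Uᵀ)
        = (U * Dmat i * Uᵀ)ᵀ * (U * G * Uᵀ) := by
      intro i
      rw [transpose_mul, transpose_mul, transpose_transpose, Dmat_transpose]
      simp only [mul_assoc, cUtU]
      congr 1
      rw [← mul_assoc, ← mul_assoc, GD_comm G hG i]
    rcases hmem with h | h | h | h
    · rw [h]; simp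
    · rw [h]; exact hcase 0
    · rw [h]; exact hcase 1
    · rw [h]; exact hcase 2
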